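/- arXiv:2502.14266 — 3 statements merged into one kernel-verified Lean document; each statement's English description precedes it below -/
import Mathlib

section
/- Let α > 1 be an odd positive integer such that every prime divisor p of α satisfies p ≡ 3 (mod 4), and let n = 2α. Then 2^{ω(n)} does not divide φ(n), where ω(n) denotes the number of distinct prime divisors of n and φ denotes Euler's totient function. -/
/-!
Every prime `p ≡ 3 (mod 4)` contributes exactly one factor `2` to `φ(p^k) = p^(k-1) (p - 1)`, so
for odd `α` all of whose prime factors are `≡ 3 (mod 4)` the `2`-adic valuation of `φ(α)` is
exactly `ω(α)`. Passing to `n = 2α` leaves the totient unchanged but adds the prime `2`, so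
`2^ω(n) = 2^(ω(α) + 1)` is too large to divide `φ(n)`.
-/

namespace Nat

lemma factorization_two_eq_one_of_mod_four_eq_two {m : ℕ} (hm : m % 4 = 2) :
    m.factorization 2 = 1 := by
  obtain ⟨k, rfl, hk⟩ : ∃ k, m = 2 * k ∧ ¬ 2 ∣ k := ⟨m / 2, by omega, by omega⟩
  rw [factorization_mul two_ne_zero (by rintro rfl; simp at hk), Finsupp.add_apply,
    prime_two.factorization_self, factorization_eq_zero_of_not_dvd hk]

lemma factorization_two_pow_mul_pred_of_mod_four_eq_three {p : ℕ} (k : ℕ) (hp : p % 4 = 3) :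
    (p ^ k * (p - 1)).factorization 2 = 1 := by
  have hp_odd : ¬ 2 ∣ p := by omega
  rw [factorization_mul (pow_ne_zero _ (by omega)) (by omega), Finsupp.add_apply,
    factorization_pow, Finsupp.smul_apply, factorization_eq_zero_of_not_dvd hp_odd,
    factorization_two_eq_one_of_mod_four_eq_two (by omega)]
  rfl

theorem factorization_totient_two_eq_card_primeFactors {n : ℕ}
    (h : ∀ p ∈ n.primeFactors, p % 4 = 3) :
    (φ n).factorization 2 = n.primeFactors.card := by
  rcases eq_or_ne n 0 with rfl | hn
  · simp
  have hfactor_ne : ∀ p ∈ n.primeFactors, p ^ (n.factorization p - 1) * (p - 1) ≠ 0 :=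
    fun p hp => mul_ne_zero (pow_ne_zero _ (prime_of_mem_primeFactors hp).ne_zero)
      (by have := (prime_of_mem_primeFactors hp).two_le; omega)
  rw [totient_eq_prod_factorization hn, Finsupp.prod, support_factorization,
    factorization_prod hfactor_ne, Finset.sum_apply',
    Finset.sum_congr rfl fun p hp => factorization_two_pow_mul_pred_of_mod_four_eq_three _ (h p hp)]
  simp

end Nat

theorem stmt_7_general (α n : ℕ) (hodd : Odd α)
    (hprimes : ∀ p : ℕ, p.Prime → p ∣ α → p % 4 = 3) (hn : n = 2 * α) :
    ¬ (2 ^ n.primeFactors.card ∣ n.totient) := by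
  subst hn
  have hcop : Nat.Coprime 2 α := Nat.coprime_two_left.mpr hodd
  have htotient : (2 * α).totient = α.totient := by
    rw [Nat.totient_mul hcop, Nat.totient_two, one_mul]
  have hcard : (2 * α).primeFactors.card = α.primeFactors.card + 1 := by
    rw [hcop.primeFactors_mul, Finset.card_union_of_disjoint hcop.disjoint_primeFactors,
      Nat.prime_two.primeFactors, Finset.card_singleton, add_comm]
  have hval : α.totient.factorization 2 = α.primeFactors.card :=
    Nat.factorization_totient_two_eq_card_primeFactors fun p hp =>
      hprimes p (Nat.prime_of_mem_primeFactors hp) (Nat.dvd_of_mem_primeFactors hp)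
  rw [htotient, hcard, Nat.prime_two.pow_dvd_iff_le_factorization
    (Nat.totient_pos.mpr hodd.pos).ne', hval]
  omega

theorem stmt_7 (α n : ℕ) (hα : 1 < α) (hodd : Odd α)
    (hprimes : ∀ p : ℕ, p.Prime → p ∣ α → p % 4 = 3) (hn : n = 2 * α) :
    ¬ (2 ^ n.primeFactors.card ∣ n.totient) :=
  stmt_7_general α n hodd hprimes hn
end

section
/- For positive integers m and n with n ∣ m, the number of (not necessarily unital) ring homomorphisms from ℤ/mℤ to ℤ/nℤ equals 2^{ω(n)}, where ω(n) denotes the number of distinct prime divisors of n. -/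
/-!
A non-unital ring homomorphism `f : ZMod m → R` is determined by the idempotent `f 1`, and since
`n ∣ m` every idempotent `e` of `R = ZMod n` arises, from `x ↦ e * x`. By the Chinese remainder
theorem the idempotents of `ZMod n` are tuples of idempotents of the rings `ZMod (p ^ k)`, and
there `e * (e - 1) = 0` with coprime factors forces `e = 0` or `e = 1`.
-/

abbrev Idempotents (M : Type*) [Mul M] := {e : M // IsIdempotentElem e}

def MulEquiv.idempotentsCongr {M N : Type*} [Mul M] [Mul N] (φ : M ≃* N) :
    Idempotents M ≃ Idempotents N :=
  φ.toEquiv.subtypeEquiv fun x => by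
    simp only [IsIdempotentElem, MulEquiv.toEquiv_eq_coe, EquivLike.coe_coe, ← map_mul,
      φ.injective.eq_iff]

def Pi.idempotentsEquiv {ι : Type*} (M : ι → Type*) [∀ i, Mul (M i)] :
    Idempotents (∀ i, M i) ≃ ∀ i, Idempotents (M i) :=
  (Equiv.subtypeEquivRight fun _ => funext_iff).trans
    (Equiv.subtypePiEquivPi (p := fun _ x => IsIdempotentElem x))

namespace ZMod

section NonUnitalRingHom

variable {R : Type*} [CommRing R] {m n : ℕ} [CharP R n]

theorem nonUnitalRingHom_apply_eq_castHom_mul (h : n ∣ m) (f : ZMod m →ₙ+* R) (x : ZMod m) :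
    f x = castHom h R x * f 1 := by
  obtain ⟨k, rfl⟩ := intCast_surjective x
  have hk : f (k : ZMod m) = k • f 1 := by rw [← map_zsmul, zsmul_one]
  rw [hk, map_intCast, zsmul_eq_mul]

def nonUnitalRingHomEquivIdempotents (h : n ∣ m) : (ZMod m →ₙ+* R) ≃ Idempotents R where
  toFun f := ⟨f 1, by rw [IsIdempotentElem, ← map_mul, mul_one]⟩
  invFun e :=
    { toFun x := castHom h R x * e
      map_add' x y := by rw [map_add, add_mul]
      map_zero' := by rw [map_zero, zero_mul]
      map_mul' x y := by
        rw [map_mul]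
        linear_combination (-(castHom h R x * castHom h R y)) * e.2.eq }
  left_inv f := by
    ext x
    exact (nonUnitalRingHom_apply_eq_castHom_mul h f x).symm
  right_inv e := by
    ext
    exact (congrArg (· * e.1) (map_one (castHom h R))).trans (one_mul e.1)

end NonUnitalRingHom

variable {n : ℕ}

theorem isIdempotentElem_iff_of_isPrimePow (hn : IsPrimePow n) {e : ZMod n} :
    IsIdempotentElem e ↔ e = 0 ∨ e = 1 := by
  refine ⟨fun he => ?_, by rintro (rfl | rfl) <;> simp [IsIdempotentElem]⟩
  have : NeZero n := ⟨hn.ne_zero⟩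
  obtain ⟨a, rfl⟩ : ∃ a : ℕ, (a : ZMod n) = e := ⟨e.val, natCast_zmod_val e⟩
  rcases a with _ | b
  · simp
  have hdvd : n ∣ (b + 1) * b := by
    rw [← natCast_eq_zero_iff]
    have he' : ((b : ZMod n) + 1) * (b + 1) = b + 1 := by exact_mod_cast he.eq
    push_cast
    linear_combination he'
  rcases (Nat.coprime_self_add_left.mpr (Nat.coprime_one_left b)).isPrimePow_dvd_mul hn |>.mp hdvd
    with hb | hb
  · exact .inl ((natCast_eq_zero_iff _ _).mpr hb)
  · right
    push_cast
    rw [(natCast_eq_zero_iff _ _).mpr hb, zero_add]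

theorem card_idempotents_of_isPrimePow (hn : IsPrimePow n) :
    Nat.card (Idempotents (ZMod n)) = 2 := by
  have : Fact (1 < n) := ⟨hn.one_lt⟩
  rw [← Set.ncard_pair (zero_ne_one (α := ZMod n)), ← Nat.card_coe_set_eq]
  exact Nat.card_congr <| Equiv.subtypeEquivRight fun _ => isIdempotentElem_iff_of_isPrimePow hn

theorem card_idempotents (hn : n ≠ 0) :
    Nat.card (Idempotents (ZMod n)) = 2 ^ n.primeFactors.card := by
  rw [Nat.card_congr (((equivPi n hn).toMulEquiv.idempotentsCongr).trans
    (Pi.idempotentsEquiv _)), Nat.card_pi]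
  have hprimePow (p : n.primeFactors) : IsPrimePow ((p : ℕ) ^ n.factorization p) :=
    (Nat.prime_of_mem_primeFactors p.2).isPrimePow.pow (Finsupp.mem_support_iff.mp p.2)
  simp only [card_idempotents_of_isPrimePow (hprimePow _), Finset.prod_const, Finset.card_univ,
    Fintype.card_coe]

end ZMod

theorem stmt_8_general (m n : ℕ) (hn : 0 < n) (h : n ∣ m) :
    Nat.card (ZMod m →ₙ+* ZMod n) = 2 ^ n.primeFactors.card := by
  rw [Nat.card_congr (ZMod.nonUnitalRingHomEquivIdempotents h), ZMod.card_idempotents hn.ne']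

theorem stmt_8 (m n : ℕ) (hm : 0 < m) (hn : 0 < n) (h : n ∣ m) :
    Nat.card (ZMod m →ₙ+* ZMod n) = 2 ^ n.primeFactors.card :=
  stmt_8_general m n hn h
end

section
/- Let m and n be positive integers with n ∣ m and n > 2, and suppose n is NOT of the form n = 2α with α an odd integer all of whose prime divisors p satisfy p ≡ 3 (mod 4). Then the number of (not necessarily unital) ring homomorphisms from ℤ/mℤ to ℤ/nℤ divides the number of surjective additive group homomorphisms from ℤ/mℤ to ℤ/nℤ. -/
/-!
When `n ∣ m`, an additive homomorphism `ZMod m →+ ZMod n` is multiplication by its value `e` at `1`,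
and every `e` occurs. It is multiplicative iff `e` is idempotent and surjective iff `e` is a unit.
By the Chinese remainder theorem there are `2 ^ ω(n)` idempotents, one choice of `0` or `1` in each
`ZMod (p ^ k)` (an idempotent reducing to `0` mod `p` is nilpotent, hence `0`), and there are
`φ(n)` units. Finally `2 ^ ω(n) ∣ φ(n)`: each odd prime `p ∣ n` contributes the even factor
`p - 1` to `φ(n)`, and when `2 ∣ n` one more factor `2` comes from `φ(2 ^ a) = 2 ^ (a - 1)` if
`4 ∣ n`, and otherwise (`n = 2α` with `α` odd) from a prime `q ≡ 1 mod 4` dividing `α`.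
-/

open Function Finset

theorem isIdempotentElem_map_iff {M N F : Type*} [Mul M] [Mul N] [FunLike F M N]
    [MulHomClass F M N] {f : F} (hf : Injective f) {e : M} :
    IsIdempotentElem (f e) ↔ IsIdempotentElem e := by
  simp only [IsIdempotentElem, ← map_mul, hf.eq_iff]

theorem Pi.isIdempotentElem_iff {ι : Type*} {M : ι → Type*} [∀ i, Mul (M i)] {e : ∀ i, M i} :
    IsIdempotentElem e ↔ ∀ i, IsIdempotentElem (e i) :=
  funext_iff

namespace ZMod

section Hom

variable {m n : ℕ} {R : Type*} [CommRing R] [CharP R n]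

theorem addMonoidHom_apply_eq_castHom_mul (hdvd : n ∣ m) (f : ZMod m →+ R) (x : ZMod m) :
    f x = castHom hdvd R x * f 1 := by
  obtain ⟨k, rfl⟩ := intCast_surjective x
  rw [map_intCast (castHom hdvd R), ← zsmul_eq_mul, ← map_zsmul, zsmul_one]

noncomputable def addMonoidHomEquivOfDvd (hdvd : n ∣ m) : (ZMod m →+ R) ≃ R where
  toFun f := f 1
  invFun a := (AddMonoidHom.mulRight a).comp (castHom hdvd R).toAddMonoidHom
  left_inv f := AddMonoidHom.ext fun x => (addMonoidHom_apply_eq_castHom_mul hdvd f x).symm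
  right_inv a := by
    show castHom hdvd R 1 * a = a
    rw [map_one, one_mul]

noncomputable def nonUnitalRingHomEquivIdempotent (hdvd : n ∣ m) :
    (ZMod m →ₙ+* R) ≃ {e : R // IsIdempotentElem e} where
  toFun f := ⟨f 1, IsIdempotentElem.one.map f⟩
  invFun e :=
    { toFun x := castHom hdvd R x * e
      map_zero' := by simp
      map_add' x y := by rw [map_add, add_mul]
      map_mul' x y := by rw [map_mul, mul_mul_mul_comm, e.2.eq] }
  left_inv f := NonUnitalRingHom.ext fun x =>
    (addMonoidHom_apply_eq_castHom_mul hdvd f.toAddMonoidHom x).symm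
  right_inv e := Subtype.ext <| by
    show castHom hdvd R 1 * e.1 = e.1
    rw [map_one, one_mul]

end Hom

theorem surjective_iff_isUnit_apply_one {m n : ℕ} (hdvd : n ∣ m) (f : ZMod m →+ ZMod n) :
    Surjective f ↔ IsUnit (f 1) := by
  constructor
  · intro hf
    obtain ⟨x, hx⟩ := hf 1
    rw [addMonoidHom_apply_eq_castHom_mul hdvd] at hx
    exact IsUnit.of_mul_eq_one_right _ hx
  · rintro ⟨u, hu⟩ y
    obtain ⟨x, hx⟩ := castHom_surjective hdvd (y * ↑u⁻¹)
    refine ⟨x, ?_⟩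
    rw [addMonoidHom_apply_eq_castHom_mul hdvd, hx, ← hu, Units.inv_mul_cancel_right]

theorem isNilpotent_of_castHom_eq_zero {p k : ℕ} (hk : k ≠ 0) {x : ZMod (p ^ k)}
    (hx : castHom (dvd_pow_self p hk) (ZMod p) x = 0) : IsNilpotent x := by
  obtain ⟨a, rfl⟩ := intCast_surjective x
  rw [map_intCast, intCast_zmod_eq_zero_iff_dvd] at hx
  refine ⟨k, ?_⟩
  rw [← Int.cast_pow, intCast_zmod_eq_zero_iff_dvd, Nat.cast_pow]
  exact pow_dvd_pow_of_dvd hx k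

theorem isIdempotentElem_iff_eq_zero_or_one_of_prime_pow {p k : ℕ} (hp : p.Prime) (hk : k ≠ 0)
    {e : ZMod (p ^ k)} : IsIdempotentElem e ↔ e = 0 ∨ e = 1 := by
  have : Fact p.Prime := ⟨hp⟩
  refine ⟨fun he => ?_, by rintro (rfl | rfl) <;> simp [IsIdempotentElem]⟩
  rcases IsIdempotentElem.iff_eq_zero_or_one.mp (he.map (castHom (dvd_pow_self p hk) (ZMod p)))
    with h | h
  · exact .inl (he.eq_zero_of_isNilpotent (isNilpotent_of_castHom_eq_zero hk h))
  · refine .inr (sub_eq_zero.mp ?_).symm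
    exact he.one_sub.eq_zero_of_isNilpotent (isNilpotent_of_castHom_eq_zero hk (by rw [map_sub, map_one, h, sub_self]))

theorem card_idempotent_prime_pow {p k : ℕ} (hp : p.Prime) (hk : k ≠ 0) :
    Nat.card {e : ZMod (p ^ k) // IsIdempotentElem e} = 2 := by
  have : Fact (1 < p ^ k) := ⟨Nat.one_lt_pow hk hp.one_lt⟩
  have h : {e : ZMod (p ^ k) | IsIdempotentElem e} = {0, 1} :=
    Set.ext fun _ => isIdempotentElem_iff_eq_zero_or_one_of_prime_pow hp hk
  rw [← Set.coe_ofPred, h, Nat.card_coe_set_eq, Set.ncard_pair zero_ne_one]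

theorem card_idempotent {n : ℕ} (hn : n ≠ 0) :
    Nat.card {e : ZMod n // IsIdempotentElem e} = 2 ^ #n.primeFactors := by
  let crt := equivPi n hn
  calc Nat.card {e : ZMod n // IsIdempotentElem e}
      = Nat.card (∀ p : n.primeFactors,
          {e : ZMod (p ^ n.factorization p) // IsIdempotentElem e}) :=
        Nat.card_congr <| (crt.toEquiv.subtypeEquiv fun _ =>
          (isIdempotentElem_map_iff crt.injective).symm.trans Pi.isIdempotentElem_iff).trans
          Equiv.subtypePiEquivPi
    _ = ∏ _p : n.primeFactors, 2 := by
        rw [Nat.card_pi]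
        exact prod_congr rfl fun p _ => card_idempotent_prime_pow
          (Nat.prime_of_mem_primeFactors p.2) (Finsupp.mem_support_iff.mp p.2)
    _ = 2 ^ #n.primeFactors := by simp

theorem card_isUnit {n : ℕ} [NeZero n] : Nat.card {a : ZMod n // IsUnit a} = n.totient := by
  rw [← card_units_eq_totient, ← Nat.card_eq_fintype_card]
  exact Nat.card_congr Submonoid.unitsTypeEquivIsUnitSubmonoid.toEquiv.symm

end ZMod

namespace Nat

open scoped Nat

theorem prod_primeFactors_sub_one_dvd_totient (n : ℕ) : ∏ p ∈ n.primeFactors, (p - 1) ∣ φ n := by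
  rw [totient_eq_div_primeFactors_mul n]
  exact dvd_mul_left _ _

theorem two_pow_card_dvd_prod_sub_one {s : Finset ℕ} (hs : ∀ p ∈ s, Odd p) :
    2 ^ #s ∣ ∏ p ∈ s, (p - 1) := by
  rw [← prod_const]
  exact prod_dvd_prod_of_dvd _ _ fun p hp => (Nat.Odd.sub_odd (hs p hp) odd_one).two_dvd

theorem two_pow_card_succ_dvd_prod_sub_one {s : Finset ℕ} (hs : ∀ p ∈ s, Odd p) {q : ℕ}
    (hq : q ∈ s) (hq4 : q % 4 = 1) : 2 ^ (#s + 1) ∣ ∏ p ∈ s, (p - 1) := by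
  rw [← mul_prod_erase s _ hq, ← card_erase_add_one hq, pow_succ, pow_succ, mul_assoc, mul_comm]
  exact mul_dvd_mul (by omega) (two_pow_card_dvd_prod_sub_one fun p hp => hs p (mem_of_mem_erase hp))

theorem two_pow_card_primeFactors_dvd_totient_of_odd {b : ℕ} (hb : Odd b) :
    2 ^ #b.primeFactors ∣ φ b :=
  (two_pow_card_dvd_prod_sub_one fun _ hp => hb.of_dvd_nat (dvd_of_mem_primeFactors hp)).trans
    (prod_primeFactors_sub_one_dvd_totient b)

theorem two_pow_card_primeFactors_succ_dvd_totient {b q : ℕ} (hb : Odd b) (hq : q.Prime)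
    (hqb : q ∣ b) (hq4 : q % 4 = 1) : 2 ^ (#b.primeFactors + 1) ∣ φ b :=
  (two_pow_card_succ_dvd_prod_sub_one (fun _ hp => hb.of_dvd_nat (dvd_of_mem_primeFactors hp))
    (mem_primeFactors.mpr ⟨hq, hqb, hb.pos.ne'⟩) hq4).trans
    (prod_primeFactors_sub_one_dvd_totient b)

theorem card_primeFactors_two_pow_mul_of_odd {a b : ℕ} (ha : a ≠ 0) (hb : Odd b) :
    #(2 ^ a * b).primeFactors = #b.primeFactors + 1 := by
  rw [primeFactors_mul (pow_ne_zero _ two_ne_zero) hb.pos.ne', primeFactors_prime_pow ha prime_two,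
    singleton_union, card_insert_of_notMem]
  exact fun h => not_even_iff_odd.mpr hb (even_iff_two_dvd.mpr (dvd_of_mem_primeFactors h))

theorem two_pow_card_primeFactors_dvd_totient {n : ℕ} (hn : n ≠ 0)
    (hnot : ¬ ∃ α : ℕ, Odd α ∧ (∀ p : ℕ, p.Prime → p ∣ α → p % 4 = 3) ∧ n = 2 * α) :
    2 ^ #n.primeFactors ∣ φ n := by
  obtain ⟨a, b, hb, rfl⟩ := exists_eq_two_pow_mul_odd hn
  have hφ : φ (2 ^ a * b) = φ (2 ^ a) * φ b := totient_mul ((coprime_two_left.mpr hb).pow_left a)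
  match a with
  | 0 => simpa using two_pow_card_primeFactors_dvd_totient_of_odd hb
  | 1 =>
    obtain ⟨q, hq, hqb, hq3⟩ : ∃ q, q.Prime ∧ q ∣ b ∧ q % 4 ≠ 3 := by
      by_contra! h
      exact hnot ⟨b, hb, h, by ring⟩
    have hq4 : q % 4 = 1 := by
      have := odd_iff.mp (hb.of_dvd_nat hqb)
      omega
    rw [hφ, card_primeFactors_two_pow_mul_of_odd one_ne_zero hb, pow_one, totient_two, one_mul]
    exact two_pow_card_primeFactors_succ_dvd_totient hb hq hqb hq4
  | a + 2 =>
    rw [hφ, card_primeFactors_two_pow_mul_of_odd (succ_ne_zero _) hb,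
      totient_prime_pow_succ prime_two, pow_succ', Nat.add_one_sub_one, mul_one]
    exact mul_dvd_mul (dvd_pow_self 2 (succ_ne_zero a))
      (two_pow_card_primeFactors_dvd_totient_of_odd hb)

end Nat

theorem stmt_9_general (m n : ℕ) (hdvd : n ∣ m) (hn : 2 < n)
    (hnot : ¬ ∃ α : ℕ, Odd α ∧ (∀ p : ℕ, p.Prime → p ∣ α → p % 4 = 3) ∧ n = 2 * α) :
    Nat.card (ZMod m →ₙ+* ZMod n) ∣
      Nat.card {ψ : ZMod m →+ ZMod n // Function.Surjective ψ} := by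
  have hn0 : n ≠ 0 := by omega
  have : NeZero n := ⟨hn0⟩
  have hring : Nat.card (ZMod m →ₙ+* ZMod n) = 2 ^ #n.primeFactors := by
    rw [Nat.card_congr (ZMod.nonUnitalRingHomEquivIdempotent hdvd), ZMod.card_idempotent hn0]
  have hsurj : Nat.card {ψ : ZMod m →+ ZMod n // Surjective ψ} = n.totient := by
    rw [← ZMod.card_isUnit]
    exact Nat.card_congr <| (ZMod.addMonoidHomEquivOfDvd hdvd).subtypeEquiv
      (ZMod.surjective_iff_isUnit_apply_one hdvd)
  rw [hring, hsurj]
  exact Nat.two_pow_card_primeFactors_dvd_totient hn0 hnot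

theorem stmt_9 (m n : ℕ) (hm : 0 < m) (hdvd : n ∣ m) (hn : 2 < n)
    (hnot : ¬ ∃ α : ℕ, Odd α ∧ (∀ p : ℕ, p.Prime → p ∣ α → p % 4 = 3) ∧ n = 2 * α) :
    Nat.card (ZMod m →ₙ+* ZMod n) ∣
      Nat.card {ψ : ZMod m →+ ZMod n // Function.Surjective ψ} :=
  stmt_9_general m n hdvd hn hnot
end
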